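/- Let X be an n×d real matrix with ‖X‖ = 1, Y ∈ ℝⁿ, M₂ a non-singular positive semi-definite n×n diagonal matrix, 𝕏̂ = XᵀM₂X, ŵ = (M₂^{1/2}X)⁺(M₂^{1/2}Y), and Σ_D a positive semi-definite n×n matrix. Define S^lin_α(A) = (I − α𝕏̂)A(I − α𝕏̂) + α²Xᵀ(Σ_D ⊙ (XAXᵀ))X and S^int_α = α²·Xᵀ(Σ_D ⊙ ((Y − Xŵ)(Y − Xŵ)ᵀ))X. If 0 < α < min{1/‖𝕏̂‖, σ⁺min(𝕏̂)/(σ⁺min(𝕏̂)² + ‖Σ_D‖)}, then ‖(id − S^lin_α)^{-1}(S^int_α)‖ ≤ (α·‖𝕏‖·‖Σ_D‖/σ⁺min(𝕏̂))·‖Y − Xŵ‖₂² ≤ ‖Y − Xŵ‖₂², where the inverse of id − S^lin_α is taken on the subspace of matrices A with ker(X) ⊆ ker(A) and 𝕏 = XᵀX. -/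

import Mathlib

open Matrix MeasureTheory ProbabilityTheory Filter
open scoped BigOperators

noncomputable section

/-- Euclidean norm of a vector in `Fin n → ℝ`. -/
def l2norm {n : ℕ} (v : Fin n → ℝ) : ℝ := Real.sqrt (∑ i, (v i) ^ 2)

/-- Spectral norm (ℓ²-operator norm) of a real matrix. -/
def specNorm {m n : ℕ} (A : Matrix (Fin m) (Fin n) ℝ) : ℝ :=
  sSup {c : ℝ | ∃ v : Fin n → ℝ, l2norm v = 1 ∧ c = l2norm (A *ᵥ v)}

/-- The smallest non-zero singular value of a real matrix:
the infimum of all positive `s` such that `s ^ 2` is an eigenvalue of `AᵀA`. -/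
def sigmaMinPos {m n : ℕ} (A : Matrix (Fin m) (Fin n) ℝ) : ℝ :=
  sInf {s : ℝ | 0 < s ∧ ∃ v : Fin n → ℝ, v ≠ 0 ∧ (Aᵀ * A) *ᵥ v = (s ^ 2) • v}

/-- `B` is the Moore–Penrose pseudo-inverse of `A` (the four Penrose conditions). -/
def IsMoorePenrose {m n : ℕ} (A : Matrix (Fin m) (Fin n) ℝ)
    (B : Matrix (Fin n) (Fin m) ℝ) : Prop :=
  A * B * A = A ∧ B * A * B = B ∧ (A * B)ᵀ = A * B ∧ (B * A)ᵀ = B * A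

/-- `w` lies in the orthogonal complement of `ker A`. -/
def perpKer {m n : ℕ} (A : Matrix (Fin m) (Fin n) ℝ) (w : Fin n → ℝ) : Prop :=
  ∀ v : Fin n → ℝ, A *ᵥ v = 0 → w ⬝ᵥ v = 0

/-- Entrywise expectation of a random matrix. -/
def matExp {Ω : Type*} [MeasurableSpace Ω] (μ : Measure Ω) {m n : ℕ}
    (M : Ω → Matrix (Fin m) (Fin n) ℝ) : Matrix (Fin m) (Fin n) ℝ :=
  Matrix.of fun i j => ∫ ω, M ω i j ∂μ

/-- Entrywise expectation of a random vector. -/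
def vecExp {Ω : Type*} [MeasurableSpace Ω] (μ : Measure Ω) {n : ℕ}
    (v : Ω → Fin n → ℝ) : Fin n → ℝ :=
  fun i => ∫ ω, v ω i ∂μ

/-! Write `H = Xᵀ M₂ X`, `G = 1 - α H`, `σ = σ⁺min(H)` and measure matrices in the Frobenius
norm. As `M₂` is positive definite, `ker H = ker X`, and the spectrum of the symmetric matrix `G`
lies in `[0, 1]`, and in `[0, 1 - α σ]` on `(ker X)ᗮ`. Hence `‖G A G‖ ≤ (1 - α σ) ‖A‖` when
`ker X ⊆ ker A`, while `‖X‖ = 1` and `|(Σ_D)ᵢⱼ| ≤ ‖Σ_D‖` bound the noise term by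
`α² ‖Σ_D‖ ‖A‖`. The step-size condition makes `S^lin_α` a strict contraction on these matrices,
so `id - S^lin_α` is invertible there. Since `S^int_α` is symmetric, so is its preimage `B`; then
`G B G` contracts by `(1 - α σ)²`, and `B = S^lin_α B + S^int_α` gives
`α σ ‖B‖ ≤ ‖S^int_α‖ ≤ α² ‖Σ_D‖ ‖Y - X ŵ‖₂²`. Finally the spectral norm is at most the
Frobenius norm, and `‖𝕏‖ = ‖X‖² = 1`. -/

open scoped RealInnerProductSpace

theorem LinearMap.IsSymmetric.norm_sub_smul_apply_le {E : Type*} [NormedAddCommGroup E]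
    [InnerProductSpace ℝ E] [FiniteDimensional ℝ E] {T : E →ₗ[ℝ] E} (hT : T.IsSymmetric)
    {c κ : ℝ} (hκ : 0 ≤ κ) {x : E}
    (h : ∀ (μ : ℝ) (u : E), u ≠ 0 → T u = μ • u → ⟪u, x⟫ ≠ 0 → |1 - c * μ| ≤ κ) :
    ‖x - c • T x‖ ≤ κ * ‖x‖ := by
  set b := hT.eigenvectorBasis rfl
  set μ := hT.eigenvalues rfl
  have heig : ∀ i, T (b i) = μ i • b i := hT.apply_eigenvectorBasis rfl
  have hcoord : ∀ i, ⟪b i, x - c • T x⟫ = (1 - c * μ i) * ⟪b i, x⟫ := fun i => by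
    rw [inner_sub_right, inner_smul_right, ← hT, heig, real_inner_smul_left]
    ring
  have hterm : ∀ i, ((1 - c * μ i) * ⟪b i, x⟫) ^ 2 ≤ (κ * ⟪b i, x⟫) ^ 2 := fun i => by
    by_cases hi : ⟪b i, x⟫ = 0
    · simp [hi]
    have hμ := abs_le.mp (h (μ i) (b i) (b.orthonormal.ne_zero i) (heig i) hi)
    rw [mul_pow, mul_pow]
    exact mul_le_mul_of_nonneg_right (sq_le_sq' hμ.1 hμ.2) (sq_nonneg _)
  refine le_of_sq_le_sq ?_ (by positivity)
  calc ‖x - c • T x‖ ^ 2 = ∑ i, ((1 - c * μ i) * ⟪b i, x⟫) ^ 2 := by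
        simp only [← b.sum_sq_inner_right, hcoord]
    _ ≤ ∑ i, (κ * ⟪b i, x⟫) ^ 2 := Finset.sum_le_sum fun i _ => hterm i
    _ = (κ * ‖x‖) ^ 2 := by simp only [mul_pow, ← Finset.mul_sum, b.sum_sq_inner_right]

section L2

variable {m n : ℕ}

lemma l2norm_eq_norm (v : Fin n → ℝ) : l2norm v = ‖WithLp.toLp 2 v‖ := by
  simp [l2norm, EuclideanSpace.norm_eq]

lemma l2norm_nonneg (v : Fin n → ℝ) : 0 ≤ l2norm v := Real.sqrt_nonneg _

lemma l2norm_sq (v : Fin n → ℝ) : l2norm v ^ 2 = ∑ i, v i ^ 2 :=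
  Real.sq_sqrt (Finset.sum_nonneg fun i _ => sq_nonneg (v i))

open scoped Matrix.Norms.L2Operator

lemma specNorm_eq_l2_opNorm (A : Matrix (Fin m) (Fin n) ℝ) : specNorm A = ‖A‖ := by
  rw [l2_opNorm_def, ← ContinuousLinearMap.sSup_sphere_eq_norm, specNorm]
  congr 1
  ext c
  constructor
  · rintro ⟨v, hv, rfl⟩
    exact ⟨WithLp.toLp 2 v, by simpa [l2norm_eq_norm] using hv, (l2norm_eq_norm _).symm⟩
  · rintro ⟨x, hx, rfl⟩
    exact ⟨x.ofLp, by simpa [l2norm_eq_norm] using hx, (l2norm_eq_norm _).symm⟩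

lemma specNorm_nonneg (A : Matrix (Fin m) (Fin n) ℝ) : 0 ≤ specNorm A := by
  rw [specNorm_eq_l2_opNorm]; exact norm_nonneg _

lemma l2norm_mulVec_le (A : Matrix (Fin m) (Fin n) ℝ) (v : Fin n → ℝ) :
    l2norm (A *ᵥ v) ≤ specNorm A * l2norm v := by
  simpa [specNorm_eq_l2_opNorm, l2norm_eq_norm] using A.l2_opNorm_mulVec (WithLp.toLp 2 v)

lemma specNorm_transpose (A : Matrix (Fin m) (Fin n) ℝ) : specNorm Aᵀ = specNorm A := by
  simpa [specNorm_eq_l2_opNorm] using A.l2_opNorm_conjTranspose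

lemma specNorm_transpose_mul_self (A : Matrix (Fin m) (Fin n) ℝ) :
    specNorm (Aᵀ * A) = specNorm A * specNorm A := by
  simpa [specNorm_eq_l2_opNorm] using A.l2_opNorm_conjTranspose_mul_self

end L2

lemma l2norm_vecMul_le {m n : ℕ} (v : Fin m → ℝ) (A : Matrix (Fin m) (Fin n) ℝ) :
    l2norm (v ᵥ* A) ≤ l2norm v * specNorm A := by
  rw [← mulVec_transpose, mul_comm, ← specNorm_transpose]
  exact l2norm_mulVec_le _ _

lemma abs_apply_le_l2norm {n : ℕ} (v : Fin n → ℝ) (i : Fin n) : |v i| ≤ l2norm v := by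
  simpa [l2norm_eq_norm] using PiLp.norm_apply_le (WithLp.toLp 2 v) i

lemma abs_apply_le_specNorm {m n : ℕ} (A : Matrix (Fin m) (Fin n) ℝ) (i : Fin m) (j : Fin n) :
    |A i j| ≤ specNorm A := by
  simpa [mulVec_single_one, l2norm_eq_norm] using
    (abs_apply_le_l2norm _ i).trans (l2norm_mulVec_le A (Pi.single j 1))

section Spectral

variable {d : ℕ} {H : Matrix (Fin d) (Fin d) ℝ} {α : ℝ}

lemma Matrix.IsHermitian.l2norm_one_sub_smul_mulVec_le (hH : H.IsHermitian) {c κ : ℝ}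
    (hκ : 0 ≤ κ) {x : Fin d → ℝ}
    (h : ∀ (μ : ℝ) (u : Fin d → ℝ), u ≠ 0 → H *ᵥ u = μ • u → u ⬝ᵥ x ≠ 0 → |1 - c * μ| ≤ κ) :
    l2norm ((1 - c • H) *ᵥ x) ≤ κ * l2norm x := by
  have hT := Matrix.isSymmetric_toEuclideanLin_iff.mpr hH
  have key := hT.norm_sub_smul_apply_le hκ (c := c) (x := WithLp.toLp 2 x)
    fun μ u hu heig hux => h μ u.ofLp (by simpa using hu) (congrArg WithLp.ofLp heig)
      (by simpa [EuclideanSpace.inner_eq_star_dotProduct, dotProduct_comm] using hux)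
  have hx : WithLp.toLp 2 ((1 - c • H) *ᵥ x) =
      WithLp.toLp 2 x - c • toEuclideanLin H (WithLp.toLp 2 x) := by
    rw [sub_mulVec, one_mulVec, smul_mulVec]
    rfl
  rw [l2norm_eq_norm, l2norm_eq_norm, hx]
  exact key

lemma Matrix.PosSemidef.nonneg_of_mulVec_eq_smul (hH : H.PosSemidef) {μ : ℝ} {u : Fin d → ℝ}
    (hu : u ≠ 0) (heig : H *ᵥ u = μ • u) : 0 ≤ μ := by
  have h := hH.dotProduct_mulVec_nonneg u
  rw [heig, dotProduct_smul, star_trivial, smul_eq_mul] at h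
  exact nonneg_of_mul_nonneg_left h (dotProduct_self_star_pos_iff.mpr hu)

lemma abs_le_specNorm_of_mulVec_eq_smul {μ : ℝ} {u : Fin d → ℝ} (hu : u ≠ 0)
    (heig : H *ᵥ u = μ • u) : |μ| ≤ specNorm H := by
  have h := l2norm_mulVec_le H u
  rw [heig, l2norm_eq_norm, l2norm_eq_norm, WithLp.toLp_smul, norm_smul, Real.norm_eq_abs] at h
  exact le_of_mul_le_mul_right h (norm_pos_iff.mpr (by simpa using hu))

lemma sigmaMinPos_nonneg {m n : ℕ} (A : Matrix (Fin m) (Fin n) ℝ) : 0 ≤ sigmaMinPos A :=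
  Real.sInf_nonneg fun _ hs => hs.1.le

lemma sigmaMinPos_le_of_mulVec_eq_smul (hH : Hᵀ = H) {μ : ℝ} {u : Fin d → ℝ} (hu : u ≠ 0)
    (heig : H *ᵥ u = μ • u) (hμ : 0 < μ) : sigmaMinPos H ≤ μ := by
  refine csInf_le ⟨0, fun _ hs => hs.1.le⟩ ⟨hμ, u, hu, ?_⟩
  rw [hH, ← mulVec_mulVec, heig, mulVec_smul, heig, smul_smul, sq]


lemma Matrix.PosSemidef.l2norm_one_sub_smul_mulVec_le (hH : H.PosSemidef) (hα : 0 ≤ α)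
    (hαH : α * specNorm H ≤ 1) (x : Fin d → ℝ) :
    l2norm ((1 - α • H) *ᵥ x) ≤ l2norm x := by
  simpa using hH.1.l2norm_one_sub_smul_mulVec_le zero_le_one fun μ u hu heig _ => by
    have hμ0 := hH.nonneg_of_mulVec_eq_smul hu heig
    have hμH := (le_abs_self μ).trans (abs_le_specNorm_of_mulVec_eq_smul hu heig)
    rw [abs_le]
    constructor <;> nlinarith [mul_le_mul_of_nonneg_left hμH hα]

lemma Matrix.PosSemidef.l2norm_one_sub_smul_mulVec_le_of_perpKer (hH : H.PosSemidef) (hα : 0 ≤ α)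
    (hαH : α * specNorm H ≤ 1) (hασ : α * sigmaMinPos H ≤ 1) {x : Fin d → ℝ}
    (hx : perpKer H x) :
    l2norm ((1 - α • H) *ᵥ x) ≤ (1 - α * sigmaMinPos H) * l2norm x := by
  refine hH.1.l2norm_one_sub_smul_mulVec_le (by linarith) fun μ u hu heig hux => ?_
  have hμ0 := hH.nonneg_of_mulVec_eq_smul hu heig
  have hμ : 0 < μ := hμ0.lt_of_ne fun h0 =>
    hux (by rw [dotProduct_comm]; exact hx u (by rw [heig, ← h0, zero_smul]))
  have hσμ := sigmaMinPos_le_of_mulVec_eq_smul (isHermitian_iff_isSymm.mp hH.1).eq hu heig hμ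
  have hμH := (le_abs_self μ).trans (abs_le_specNorm_of_mulVec_eq_smul hu heig)
  rw [abs_le]
  constructor <;> nlinarith [mul_le_mul_of_nonneg_left hμH hα, mul_le_mul_of_nonneg_left hσμ hα]

end Spectral

section Kernel

variable {n d : ℕ}

def vanishingOnKer (X : Matrix (Fin n) (Fin d) ℝ) : Submodule ℝ (Matrix (Fin d) (Fin d) ℝ) where
  carrier := {A | ∀ v, X *ᵥ v = 0 → A *ᵥ v = 0}
  add_mem' {A B} hA hB v hv := by rw [add_mulVec, hA v hv, hB v hv, add_zero]
  zero_mem' v _ := zero_mulVec v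
  smul_mem' c A hA v hv := by rw [smul_mulVec, hA v hv, smul_zero]

def vanishingOnKerTwoSided (X : Matrix (Fin n) (Fin d) ℝ) :
    Submodule ℝ (Matrix (Fin d) (Fin d) ℝ) :=
  vanishingOnKer X ⊓ (vanishingOnKer X).comap (transposeLinearEquiv (Fin d) (Fin d) ℝ ℝ).toLinearMap

lemma mul_mem_vanishingOnKer {X : Matrix (Fin n) (Fin d) ℝ} (B : Matrix (Fin d) (Fin d) ℝ)
    {A : Matrix (Fin d) (Fin d) ℝ} (hA : A ∈ vanishingOnKer X) : B * A ∈ vanishingOnKer X :=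
  fun v hv => by rw [← mulVec_mulVec, hA v hv, mulVec_zero]

lemma perpKer_of_mem_vanishingOnKer {X : Matrix (Fin n) (Fin d) ℝ}
    {A : Matrix (Fin d) (Fin d) ℝ} (hA : A ∈ vanishingOnKer X) (i : Fin d) : perpKer X (A i) :=
  fun v hv => congrFun (hA v hv) i

lemma Matrix.PosDef.perpKer_transpose_mul_mul {M : Matrix (Fin n) (Fin n) ℝ} (hM : M.PosDef)
    {X : Matrix (Fin n) (Fin d) ℝ} {x : Fin d → ℝ} (hx : perpKer X x) :
    perpKer (Xᵀ * M * X) x := by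
  refine fun v hv => hx v ?_
  by_contra hXv
  have hquad : v ⬝ᵥ ((Xᵀ * M * X) *ᵥ v) = (X *ᵥ v) ⬝ᵥ (M *ᵥ (X *ᵥ v)) := by
    rw [← mulVec_mulVec, ← mulVec_mulVec, dotProduct_mulVec, vecMul_transpose]
  have h := hM.dotProduct_mulVec_pos hXv
  rw [star_trivial, ← hquad, hv, dotProduct_zero] at h
  exact h.false

lemma transpose_mul_mul_mem_vanishingOnKerTwoSided (X : Matrix (Fin n) (Fin d) ℝ)
    {N : Matrix (Fin n) (Fin n) ℝ} (hN : Nᵀ = N) : Xᵀ * N * X ∈ vanishingOnKerTwoSided X := by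
  have h : Xᵀ * N * X ∈ vanishingOnKer X := fun v hv => by rw [← mulVec_mulVec, hv, mulVec_zero]
  refine ⟨h, ?_⟩
  simpa [transpose_mul, hN, Matrix.mul_assoc] using h

lemma Matrix.PosDef.posSemidef_transpose_mul_mul {M : Matrix (Fin n) (Fin n) ℝ} (hM : M.PosDef)
    (X : Matrix (Fin n) (Fin d) ℝ) : (Xᵀ * M * X).PosSemidef := by
  simpa [conjTranspose_eq_transpose_of_trivial] using hM.posSemidef.conjTranspose_mul_mul_same X

end Kernel

section LinearOperator

variable {n d : ℕ} (X : Matrix (Fin n) (Fin d) ℝ) (M2 SD : Matrix (Fin n) (Fin n) ℝ) (α : ℝ)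

/-- The operator `S^lin_α` of the paper, with `𝕏̂ = Xᵀ M₂ X` and `Σ_D = SD`. -/
def sLin : Matrix (Fin d) (Fin d) ℝ →ₗ[ℝ] Matrix (Fin d) (Fin d) ℝ where
  toFun A := (1 - α • (Xᵀ * M2 * X)) * A * (1 - α • (Xᵀ * M2 * X)) +
    α ^ 2 • (Xᵀ * SD ⊙ (X * A * Xᵀ) * X)
  map_add' A B := by
    simp only [Matrix.mul_add, Matrix.add_mul, hadamard_add, smul_add]
    exact add_add_add_comm ..
  map_smul' c A := by
    simp only [Matrix.mul_smul, Matrix.smul_mul, hadamard_smul, smul_add, smul_comm c (α ^ 2),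
      RingHom.id_apply]

def idSubSLin : Matrix (Fin d) (Fin d) ℝ →ₗ[ℝ] Matrix (Fin d) (Fin d) ℝ :=
  LinearMap.id - sLin X M2 SD α

variable {X M2 SD α}

lemma idSubSLin_apply (A : Matrix (Fin d) (Fin d) ℝ) :
    idSubSLin X M2 SD α A = A - sLin X M2 SD α A :=
  rfl

lemma sLin_mem_vanishingOnKer {A : Matrix (Fin d) (Fin d) ℝ} (hA : A ∈ vanishingOnKer X) :
    sLin X M2 SD α A ∈ vanishingOnKer X := fun v hv => by
  have hstep : (1 - α • (Xᵀ * M2 * X)) *ᵥ v = v := by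
    rw [sub_mulVec, one_mulVec, smul_mulVec, ← mulVec_mulVec, hv, mulVec_zero, smul_zero,
      sub_zero]
  simp only [sLin, LinearMap.coe_mk, AddHom.coe_mk, add_mulVec, smul_mulVec]
  rw [← mulVec_mulVec, hstep, ← mulVec_mulVec, hA v hv, mulVec_zero, ← mulVec_mulVec, hv,
    mulVec_zero, smul_zero, add_zero]

lemma sLin_transpose (hM2 : M2ᵀ = M2) (hSD : SDᵀ = SD) (A : Matrix (Fin d) (Fin d) ℝ) :
    (sLin X M2 SD α A)ᵀ = sLin X M2 SD α Aᵀ := by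
  simp only [sLin, LinearMap.coe_mk, AddHom.coe_mk, transpose_add, transpose_smul, transpose_mul,
    transpose_sub, transpose_one, transpose_transpose, transpose_hadamard, hM2, hSD]
  simp only [Matrix.mul_assoc]

lemma sLin_mem_vanishingOnKerTwoSided (hM2 : M2ᵀ = M2) (hSD : SDᵀ = SD)
    {A : Matrix (Fin d) (Fin d) ℝ} (hA : A ∈ vanishingOnKerTwoSided X) :
    sLin X M2 SD α A ∈ vanishingOnKerTwoSided X :=
  ⟨sLin_mem_vanishingOnKer hA.1, by
    simpa [sLin_transpose hM2 hSD] using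
      sLin_mem_vanishingOnKer (M2 := M2) (SD := SD) (α := α) hA.2⟩

lemma mapsTo_idSubSLin_vanishingOnKer :
    Set.MapsTo (idSubSLin X M2 SD α) (vanishingOnKer X) (vanishingOnKer X) := fun A hA => by
  rw [SetLike.mem_coe, idSubSLin_apply]
  exact sub_mem hA (sLin_mem_vanishingOnKer hA)

lemma mapsTo_idSubSLin_vanishingOnKerTwoSided (hM2 : M2ᵀ = M2) (hSD : SDᵀ = SD) :
    Set.MapsTo (idSubSLin X M2 SD α) (vanishingOnKerTwoSided X) (vanishingOnKerTwoSided X) :=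
  fun A hA => by
    rw [SetLike.mem_coe, idSubSLin_apply]
    exact sub_mem hA (sLin_mem_vanishingOnKerTwoSided hM2 hSD hA)

end LinearOperator

attribute [local instance] Matrix.frobeniusNormedAddCommGroup Matrix.frobeniusNormedSpace

section Frobenius

variable {m n k : ℕ}

lemma frobenius_norm_sq_eq_sum (A : Matrix (Fin m) (Fin n) ℝ) :
    ‖A‖ ^ 2 = ∑ i, l2norm (A i) ^ 2 := by
  change ‖WithLp.toLp 2 fun i => WithLp.toLp 2 (A i)‖ ^ 2 = _
  simp [EuclideanSpace.norm_sq_eq, PiLp.norm_sq_eq_of_L2, l2norm_eq_norm]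

lemma frobenius_norm_mul_le_of_rows {M : Matrix (Fin m) (Fin n) ℝ} {C : Matrix (Fin n) (Fin k) ℝ}
    {κ : ℝ} (hκ : 0 ≤ κ) (h : ∀ i, l2norm (M i ᵥ* C) ≤ κ * l2norm (M i)) :
    ‖M * C‖ ≤ κ * ‖M‖ := by
  refine le_of_sq_le_sq ?_ (by positivity)
  rw [mul_pow, frobenius_norm_sq_eq_sum, frobenius_norm_sq_eq_sum,
    Finset.mul_sum]
  refine Finset.sum_le_sum fun i _ => ?_
  rw [← mul_pow]
  exact pow_le_pow_left₀ (l2norm_nonneg _) (h i) 2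

lemma frobenius_norm_mul_le_mul_specNorm (M : Matrix (Fin m) (Fin n) ℝ)
    (C : Matrix (Fin n) (Fin k) ℝ) : ‖M * C‖ ≤ ‖M‖ * specNorm C := by
  rw [mul_comm]
  exact frobenius_norm_mul_le_of_rows (specNorm_nonneg C) fun i => by
    rw [mul_comm]; exact l2norm_vecMul_le _ _

lemma frobenius_norm_mul_le_specNorm_mul (C : Matrix (Fin m) (Fin n) ℝ)
    (M : Matrix (Fin n) (Fin k) ℝ) : ‖C * M‖ ≤ specNorm C * ‖M‖ := by
  rw [← frobenius_norm_transpose, transpose_mul, ← frobenius_norm_transpose M, mul_comm,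
    ← specNorm_transpose]
  exact frobenius_norm_mul_le_mul_specNorm _ _

lemma frobenius_norm_mul_mul_le (C : Matrix (Fin m) (Fin n) ℝ) (M : Matrix (Fin n) (Fin k) ℝ)
    {l : ℕ} (D : Matrix (Fin k) (Fin l) ℝ) :
    ‖C * M * D‖ ≤ specNorm C * ‖M‖ * specNorm D :=
  (frobenius_norm_mul_le_mul_specNorm _ _).trans <|
    mul_le_mul_of_nonneg_right (frobenius_norm_mul_le_specNorm_mul _ _) (specNorm_nonneg _)

lemma specNorm_le_frobenius_norm (A : Matrix (Fin m) (Fin n) ℝ) : specNorm A ≤ ‖A‖ := by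
  refine Real.sSup_le ?_ (norm_nonneg _)
  rintro _ ⟨v, hv, rfl⟩
  have hcol {p : ℕ} (w : Fin p → ℝ) : ‖replicateCol (Fin 1) w‖ = l2norm w :=
    (frobenius_norm_replicateCol w).trans (l2norm_eq_norm w).symm
  have h := frobenius_norm_mul A (replicateCol (Fin 1) v)
  rwa [← replicateCol_mulVec, hcol, hcol, hv, mul_one] at h

lemma frobenius_norm_hadamard_le (S M : Matrix (Fin m) (Fin n) ℝ) :
    ‖S ⊙ M‖ ≤ specNorm S * ‖M‖ := by
  refine le_of_sq_le_sq ?_ (mul_nonneg (specNorm_nonneg S) (norm_nonneg M))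
  simp only [frobenius_norm_sq_eq_sum, mul_pow, Finset.mul_sum, l2norm_sq]
  refine Finset.sum_le_sum fun i _ => Finset.sum_le_sum fun j _ => ?_
  rw [hadamard_apply, mul_pow]
  exact mul_le_mul_of_nonneg_right (sq_le_sq.mpr ((abs_apply_le_specNorm S i j).trans
    (le_abs_self _))) (sq_nonneg _)

lemma frobenius_norm_vecMulVec (u v : Fin n → ℝ) : ‖vecMulVec u v‖ = l2norm u * l2norm v := by
  refine (sq_eq_sq₀ (norm_nonneg _) (by positivity [l2norm_nonneg u, l2norm_nonneg v])).mp ?_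
  simp only [frobenius_norm_sq_eq_sum, mul_pow, l2norm_sq]
  simp [vecMulVec_apply, mul_pow, ← Finset.mul_sum, ← Finset.sum_mul]

end Frobenius

section GradientStepFrobenius

variable {m d : ℕ} {H : Matrix (Fin d) (Fin d) ℝ} {α : ℝ}

lemma Matrix.PosSemidef.transpose_one_sub_smul (hH : H.PosSemidef) :
    (1 - α • H)ᵀ = 1 - α • H := by
  rw [transpose_sub, transpose_one, transpose_smul, (isHermitian_iff_isSymm.mp hH.1).eq]

lemma Matrix.PosSemidef.vecMul_one_sub_smul (hH : H.PosSemidef) (x : Fin d → ℝ) :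
    x ᵥ* (1 - α • H) = (1 - α • H) *ᵥ x := by
  rw [← mulVec_transpose, hH.transpose_one_sub_smul]

lemma frobenius_norm_mul_one_sub_smul_le (hH : H.PosSemidef) (hα : 0 ≤ α)
    (hαH : α * specNorm H ≤ 1) (M : Matrix (Fin m) (Fin d) ℝ) :
    ‖M * (1 - α • H)‖ ≤ ‖M‖ := by
  simpa using frobenius_norm_mul_le_of_rows zero_le_one fun i => by
    simpa [hH.vecMul_one_sub_smul] using hH.l2norm_one_sub_smul_mulVec_le hα hαH (M i)

lemma frobenius_norm_mul_one_sub_smul_le_of_perpKer (hH : H.PosSemidef) (hα : 0 ≤ α)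
    (hαH : α * specNorm H ≤ 1) (hασ : α * sigmaMinPos H ≤ 1) {M : Matrix (Fin m) (Fin d) ℝ}
    (hM : ∀ i, perpKer H (M i)) :
    ‖M * (1 - α • H)‖ ≤ (1 - α * sigmaMinPos H) * ‖M‖ :=
  frobenius_norm_mul_le_of_rows (by linarith) fun i => by
    simpa [hH.vecMul_one_sub_smul] using
      hH.l2norm_one_sub_smul_mulVec_le_of_perpKer hα hαH hασ (hM i)

lemma frobenius_norm_one_sub_smul_mul_le (hH : H.PosSemidef) (hα : 0 ≤ α)
    (hαH : α * specNorm H ≤ 1) (M : Matrix (Fin d) (Fin m) ℝ) :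
    ‖(1 - α • H) * M‖ ≤ ‖M‖ := by
  rw [← frobenius_norm_transpose, transpose_mul, hH.transpose_one_sub_smul,
    ← frobenius_norm_transpose M]
  exact frobenius_norm_mul_one_sub_smul_le hH hα hαH Mᵀ

lemma frobenius_norm_one_sub_smul_mul_le_of_perpKer (hH : H.PosSemidef) (hα : 0 ≤ α)
    (hαH : α * specNorm H ≤ 1) (hασ : α * sigmaMinPos H ≤ 1) {M : Matrix (Fin d) (Fin m) ℝ}
    (hM : ∀ j, perpKer H (Mᵀ j)) :
    ‖(1 - α • H) * M‖ ≤ (1 - α * sigmaMinPos H) * ‖M‖ := by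
  rw [← frobenius_norm_transpose, transpose_mul, hH.transpose_one_sub_smul,
    ← frobenius_norm_transpose M]
  exact frobenius_norm_mul_one_sub_smul_le_of_perpKer hH hα hαH hασ hM

end GradientStepFrobenius

section Estimates

variable {n d : ℕ} {X : Matrix (Fin n) (Fin d) ℝ} {M2 SD : Matrix (Fin n) (Fin n) ℝ} {α : ℝ}

lemma frobenius_norm_transpose_mul_mul_le (hX : specNorm X ≤ 1) (N : Matrix (Fin n) (Fin n) ℝ) :
    ‖Xᵀ * N * X‖ ≤ ‖N‖ := by
  have h := frobenius_norm_mul_mul_le Xᵀ N X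
  rw [specNorm_transpose] at h
  nlinarith [specNorm_nonneg X, norm_nonneg N, mul_nonneg (specNorm_nonneg X) (norm_nonneg N)]

lemma frobenius_norm_mul_mul_transpose_le (hX : specNorm X ≤ 1) (A : Matrix (Fin d) (Fin d) ℝ) :
    ‖X * A * Xᵀ‖ ≤ ‖A‖ := by
  have h := frobenius_norm_mul_mul_le X A Xᵀ
  rw [specNorm_transpose] at h
  nlinarith [specNorm_nonneg X, norm_nonneg A, mul_nonneg (specNorm_nonneg X) (norm_nonneg A)]

lemma frobenius_norm_sLin_le_add (hX : specNorm X ≤ 1) (A : Matrix (Fin d) (Fin d) ℝ) :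
    ‖sLin X M2 SD α A‖ ≤
      ‖(1 - α • (Xᵀ * M2 * X)) * A * (1 - α • (Xᵀ * M2 * X))‖ + α ^ 2 * specNorm SD * ‖A‖ := by
  refine (norm_add_le _ _).trans (add_le_add_right ?_ _)
  rw [norm_smul, Real.norm_of_nonneg (sq_nonneg α), mul_assoc]
  refine mul_le_mul_of_nonneg_left ?_ (sq_nonneg α)
  calc ‖Xᵀ * SD ⊙ (X * A * Xᵀ) * X‖ ≤ ‖SD ⊙ (X * A * Xᵀ)‖ :=
        frobenius_norm_transpose_mul_mul_le hX _
    _ ≤ specNorm SD * ‖X * A * Xᵀ‖ := frobenius_norm_hadamard_le _ _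
    _ ≤ specNorm SD * ‖A‖ :=
      mul_le_mul_of_nonneg_left (frobenius_norm_mul_mul_transpose_le hX A) (specNorm_nonneg SD)

lemma frobenius_norm_transpose_mul_hadamard_vecMulVec_mul_le (hX : specNorm X ≤ 1)
    (SD : Matrix (Fin n) (Fin n) ℝ) (r : Fin n → ℝ) :
    ‖Xᵀ * SD ⊙ vecMulVec r r * X‖ ≤ specNorm SD * l2norm r ^ 2 := by
  calc ‖Xᵀ * SD ⊙ vecMulVec r r * X‖ ≤ ‖SD ⊙ vecMulVec r r‖ :=
        frobenius_norm_transpose_mul_mul_le hX _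
    _ ≤ specNorm SD * ‖vecMulVec r r‖ := frobenius_norm_hadamard_le _ _
    _ = specNorm SD * l2norm r ^ 2 := by rw [frobenius_norm_vecMulVec, sq]

lemma frobenius_norm_sLin_le (hX : specNorm X ≤ 1) (hM2 : M2.PosDef) (hα : 0 ≤ α)
    (hαH : α * specNorm (Xᵀ * M2 * X) ≤ 1) (hασ : α * sigmaMinPos (Xᵀ * M2 * X) ≤ 1)
    {A : Matrix (Fin d) (Fin d) ℝ} (hA : A ∈ vanishingOnKer X) :
    ‖sLin X M2 SD α A‖ ≤ (1 - α * sigmaMinPos (Xᵀ * M2 * X) + α ^ 2 * specNorm SD) * ‖A‖ := by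
  set G := 1 - α • (Xᵀ * M2 * X)
  have hH := hM2.posSemidef_transpose_mul_mul X
  have hGAG := frobenius_norm_mul_one_sub_smul_le_of_perpKer hH hα hαH hασ (M := G * A) fun i =>
    hM2.perpKer_transpose_mul_mul (perpKer_of_mem_vanishingOnKer (mul_mem_vanishingOnKer G hA) i)
  have hGA := mul_le_mul_of_nonneg_left (frobenius_norm_one_sub_smul_mul_le hH hα hαH A)
    (sub_nonneg.mpr hασ)
  linarith [frobenius_norm_sLin_le_add (M2 := M2) (SD := SD) (α := α) hX A]

lemma frobenius_norm_sLin_le_of_mem_vanishingOnKerTwoSided (hX : specNorm X ≤ 1) (hM2 : M2.PosDef)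
    (hα : 0 ≤ α) (hαH : α * specNorm (Xᵀ * M2 * X) ≤ 1)
    (hασ : α * sigmaMinPos (Xᵀ * M2 * X) ≤ 1) {A : Matrix (Fin d) (Fin d) ℝ}
    (hA : A ∈ vanishingOnKerTwoSided X) :
    ‖sLin X M2 SD α A‖ ≤ ((1 - α * sigmaMinPos (Xᵀ * M2 * X)) ^ 2 + α ^ 2 * specNorm SD) * ‖A‖ := by
  set G := 1 - α • (Xᵀ * M2 * X)
  have hH := hM2.posSemidef_transpose_mul_mul X
  have hGAG := frobenius_norm_mul_one_sub_smul_le_of_perpKer hH hα hαH hασ (M := G * A) fun i =>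
    hM2.perpKer_transpose_mul_mul (perpKer_of_mem_vanishingOnKer (mul_mem_vanishingOnKer G hA.1) i)
  have hGA := mul_le_mul_of_nonneg_left (frobenius_norm_one_sub_smul_mul_le_of_perpKer hH hα hαH hασ
    (M := A) fun j => hM2.perpKer_transpose_mul_mul (perpKer_of_mem_vanishingOnKer hA.2 j))
    (sub_nonneg.mpr hασ)
  linarith [frobenius_norm_sLin_le_add (M2 := M2) (SD := SD) (α := α) hX A]

end Estimates

section Resolvent

variable {n d : ℕ} {X : Matrix (Fin n) (Fin d) ℝ} {M2 SD : Matrix (Fin n) (Fin n) ℝ} {α : ℝ}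

lemma injOn_idSubSLin (hX : specNorm X ≤ 1) (hM2 : M2.PosDef) (hα : 0 < α)
    (hαH : α * specNorm (Xᵀ * M2 * X) ≤ 1) (hασ : α * sigmaMinPos (Xᵀ * M2 * X) ≤ 1)
    (hαSD : α * specNorm SD < sigmaMinPos (Xᵀ * M2 * X)) :
    Set.InjOn (idSubSLin X M2 SD α) (vanishingOnKer X) := by
  intro A hA B hB hAB
  set C := A - B
  have hC : C - sLin X M2 SD α C = 0 := by
    rw [← idSubSLin_apply, map_sub, hAB, sub_self]
  have hbound := frobenius_norm_sLin_le (SD := SD) hX hM2 hα.le hαH hασ (Submodule.sub_mem _ hA hB)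
  rw [← sub_eq_zero.mp hC] at hbound
  have : ‖C‖ = 0 := by nlinarith [norm_nonneg C, mul_lt_mul_of_pos_left hαSD hα]
  exact sub_eq_zero.mp (norm_eq_zero.mp this)

lemma mul_frobenius_norm_le_frobenius_norm_sub_sLin (hX : specNorm X ≤ 1) (hM2 : M2.PosDef)
    (hα : 0 ≤ α) (hαH : α * specNorm (Xᵀ * M2 * X) ≤ 1)
    (hstep : α * (sigmaMinPos (Xᵀ * M2 * X) ^ 2 + specNorm SD) ≤ sigmaMinPos (Xᵀ * M2 * X))
    {B : Matrix (Fin d) (Fin d) ℝ} (hB : B ∈ vanishingOnKerTwoSided X) :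
    α * sigmaMinPos (Xᵀ * M2 * X) * ‖B‖ ≤ ‖B - sLin X M2 SD α B‖ := by
  have hσ := sigmaMinPos_nonneg (Xᵀ * M2 * X)
  have hs := specNorm_nonneg SD
  have hασ : α * sigmaMinPos (Xᵀ * M2 * X) ≤ 1 := by
    rcases hσ.eq_or_lt with h0 | hpos
    · rw [← h0, mul_zero]; exact zero_le_one
    · nlinarith [mul_nonneg hα hs]
  have hbound :=
    frobenius_norm_sLin_le_of_mem_vanishingOnKerTwoSided (SD := SD) hX hM2 hα hαH hασ hB
  have hcoef : α * sigmaMinPos (Xᵀ * M2 * X) ≤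
      1 - ((1 - α * sigmaMinPos (Xᵀ * M2 * X)) ^ 2 + α ^ 2 * specNorm SD) := by
    nlinarith [mul_le_mul_of_nonneg_left hstep hα]
  nlinarith [norm_sub_norm_le B (sLin X M2 SD α B), mul_le_mul_of_nonneg_right hcoef (norm_nonneg B)]

lemma bijOn_idSubSLin (hX : specNorm X ≤ 1) (hM2 : M2.PosDef) (hα : 0 < α)
    (hαH : α * specNorm (Xᵀ * M2 * X) ≤ 1)
    (hstep : α * (sigmaMinPos (Xᵀ * M2 * X) ^ 2 + specNorm SD) < sigmaMinPos (Xᵀ * M2 * X)) :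
    Set.BijOn (idSubSLin X M2 SD α) (vanishingOnKer X) (vanishingOnKer X) := by
  have hσ := sigmaMinPos_nonneg (Xᵀ * M2 * X)
  have hs := specNorm_nonneg SD
  have hinj := injOn_idSubSLin (SD := SD) hX hM2 hα hαH (by nlinarith) (by nlinarith)
  exact ⟨mapsTo_idSubSLin_vanishingOnKer, hinj,
    (LinearMap.injOn_iff_surjOn mapsTo_idSubSLin_vanishingOnKer).mp hinj⟩

/-- The preimage of `C` lies in `vanishingOnKerTwoSided X`, where `S^lin_α` contracts by
`(1 - α σ)² + α² ‖Σ_D‖` rather than `1 - α σ + α² ‖Σ_D‖`. -/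
lemma mul_frobenius_norm_invFunOn_idSubSLin_le (hX : specNorm X ≤ 1) (hM2 : M2.PosDef)
    (hSD : SDᵀ = SD) (hα : 0 < α) (hαH : α * specNorm (Xᵀ * M2 * X) ≤ 1)
    (hstep : α * (sigmaMinPos (Xᵀ * M2 * X) ^ 2 + specNorm SD) < sigmaMinPos (Xᵀ * M2 * X))
    {C : Matrix (Fin d) (Fin d) ℝ} (hC : C ∈ vanishingOnKerTwoSided X) :
    α * sigmaMinPos (Xᵀ * M2 * X) *
        ‖Function.invFunOn (idSubSLin X M2 SD α) (vanishingOnKer X) C‖ ≤ ‖C‖ := by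
  have hbij := bijOn_idSubSLin hX hM2 hα hαH hstep
  have hmapsW := mapsTo_idSubSLin_vanishingOnKerTwoSided (X := X) (α := α)
    (isHermitian_iff_isSymm.mp hM2.1).eq hSD
  obtain ⟨B, hBW, rfl⟩ := (LinearMap.injOn_iff_surjOn hmapsW).mp
    (hbij.injOn.mono fun _ h => h.1) hC
  rw [hbij.invOn_invFunOn.1 hBW.1, idSubSLin_apply]
  exact mul_frobenius_norm_le_frobenius_norm_sub_sLin hX hM2 hα.le hαH hstep.le hBW

end Resolvent

theorem randomly_weighted_gd_stmt15_general {n d : ℕ}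
    (X : Matrix (Fin n) (Fin d) ℝ) (hXnorm : specNorm X = 1)
    (Y : Fin n → ℝ)
    (M2 : Matrix (Fin n) (Fin n) ℝ)
    (hM2psd : M2.PosSemidef) (hM2unit : IsUnit M2.det)
    (what : Fin d → ℝ)
    (SD : Matrix (Fin n) (Fin n) ℝ) (hSDpsd : SD.PosSemidef)
    (α : ℝ) (hα0 : 0 < α)
    (hα1 : α * specNorm (Xᵀ * M2 * X) < 1)
    (hα2 : α * (sigmaMinPos (Xᵀ * M2 * X) ^ 2 + specNorm SD)
        < sigmaMinPos (Xᵀ * M2 * X)) :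
    ∃ T : Matrix (Fin d) (Fin d) ℝ → Matrix (Fin d) (Fin d) ℝ,
      (∀ A : Matrix (Fin d) (Fin d) ℝ,
        (∀ v : Fin d → ℝ, X *ᵥ v = 0 → A *ᵥ v = 0) →
        (∀ v : Fin d → ℝ, X *ᵥ v = 0 → T A *ᵥ v = 0)) ∧
      (∀ A : Matrix (Fin d) (Fin d) ℝ,
        (∀ v : Fin d → ℝ, X *ᵥ v = 0 → A *ᵥ v = 0) →
        T (A - (((1 : Matrix (Fin d) (Fin d) ℝ) - α • (Xᵀ * M2 * X)) * A
              * ((1 : Matrix (Fin d) (Fin d) ℝ) - α • (Xᵀ * M2 * X))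
            + α ^ 2 • (Xᵀ * Matrix.hadamard SD (X * A * Xᵀ) * X))) = A) ∧
      (∀ A : Matrix (Fin d) (Fin d) ℝ,
        (∀ v : Fin d → ℝ, X *ᵥ v = 0 → A *ᵥ v = 0) →
        T A - (((1 : Matrix (Fin d) (Fin d) ℝ) - α • (Xᵀ * M2 * X)) * T A
              * ((1 : Matrix (Fin d) (Fin d) ℝ) - α • (Xᵀ * M2 * X))
            + α ^ 2 • (Xᵀ * Matrix.hadamard SD (X * T A * Xᵀ) * X)) = A) ∧
      specNorm (T (α ^ 2 • (Xᵀ * Matrix.hadamard SD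
            (Matrix.vecMulVec (Y - X *ᵥ what) (Y - X *ᵥ what)) * X)))
        ≤ α * specNorm (Xᵀ * X) * specNorm SD / sigmaMinPos (Xᵀ * M2 * X)
            * (l2norm (Y - X *ᵥ what)) ^ 2 ∧
      α * specNorm (Xᵀ * X) * specNorm SD / sigmaMinPos (Xᵀ * M2 * X)
          * (l2norm (Y - X *ᵥ what)) ^ 2
        ≤ (l2norm (Y - X *ᵥ what)) ^ 2 := by
  set σ := sigmaMinPos (Xᵀ * M2 * X)
  set r := Y - X *ᵥ what
  set Sint := α ^ 2 • (Xᵀ * SD ⊙ vecMulVec r r * X)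
  have hX : specNorm X ≤ 1 := hXnorm.le
  have hXX : specNorm (Xᵀ * X) = 1 := by rw [specNorm_transpose_mul_self, hXnorm, mul_one]
  have hM2 : M2.PosDef := hM2psd.posDef_iff_isUnit.mpr ((isUnit_iff_isUnit_det M2).mpr hM2unit)
  have hSD : SDᵀ = SD := (isHermitian_iff_isSymm.mp hSDpsd.1).eq
  have hσ : 0 < σ := by nlinarith [sigmaMinPos_nonneg (Xᵀ * M2 * X), specNorm_nonneg SD]
  have hbij := bijOn_idSubSLin (SD := SD) hX hM2 hα0 hα1.le hα2
  have hSint : Sint ∈ vanishingOnKerTwoSided X := Submodule.smul_mem _ _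
    (transpose_mul_mul_mem_vanishingOnKerTwoSided X
      (by rw [transpose_hadamard, hSD, transpose_vecMulVec]))
  have hB := mul_frobenius_norm_invFunOn_idSubSLin_le hX hM2 hSD hα0 hα1.le hα2 hSint
  have hSintBound : ‖Sint‖ ≤ α ^ 2 * (specNorm SD * l2norm r ^ 2) := by
    rw [norm_smul, Real.norm_of_nonneg (sq_nonneg α)]
    exact mul_le_mul_of_nonneg_left
      (frobenius_norm_transpose_mul_hadamard_vecMulVec_mul_le hX SD r) (sq_nonneg α)
  refine ⟨Function.invFunOn (idSubSLin X M2 SD α) (vanishingOnKer X),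
    fun A hA => hbij.surjOn.mapsTo_invFunOn hA, fun A hA => hbij.invOn_invFunOn.1 hA,
    fun A hA => hbij.invOn_invFunOn.2 hA, ?_, ?_⟩ <;> rw [hXX, mul_one]
  · rw [div_mul_eq_mul_div, le_div_iff₀ hσ]
    nlinarith [mul_le_mul_of_nonneg_left (specNorm_le_frobenius_norm
      (Function.invFunOn (idSubSLin X M2 SD α) (vanishingOnKer X) Sint)) hσ.le]
  · refine mul_le_of_le_one_left (sq_nonneg _) ((div_le_one hσ).mpr ?_)
    nlinarith [sq_nonneg σ]

/-- long-run variance bound, display (14) in the paper.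
For `‖X‖ = 1` and admissible `α`, the matrix `(id - S^lin_α)^{-1}(S^int_α)`
(inverse taken on the subspace of matrices whose kernel contains `ker X`)
has spectral norm at most `(α‖𝕏‖‖Σ_D‖/σ⁺min(𝕏̂))‖Y - Xŵ‖₂² ≤ ‖Y - Xŵ‖₂²`. -/
theorem randomly_weighted_gd_stmt15 {n d : ℕ}
    (X : Matrix (Fin n) (Fin d) ℝ) (hXnorm : specNorm X = 1)
    (Y : Fin n → ℝ)
    (M2 Rh : Matrix (Fin n) (Fin n) ℝ)
    (hM2diag : M2.IsDiag) (hM2psd : M2.PosSemidef) (hM2unit : IsUnit M2.det)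
    (hRhpsd : Rh.PosSemidef) (hRR : Rh * Rh = M2)
    (Xhp : Matrix (Fin d) (Fin n) ℝ) (hXhp : IsMoorePenrose (Rh * X) Xhp)
    (what : Fin d → ℝ) (hwhat : what = Xhp *ᵥ (Rh *ᵥ Y))
    (SD : Matrix (Fin n) (Fin n) ℝ) (hSDpsd : SD.PosSemidef)
    (α : ℝ) (hα0 : 0 < α)
    (hα1 : α * specNorm (Xᵀ * M2 * X) < 1)
    (hα2 : α * (sigmaMinPos (Xᵀ * M2 * X) ^ 2 + specNorm SD)
        < sigmaMinPos (Xᵀ * M2 * X)) :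
    ∃ T : Matrix (Fin d) (Fin d) ℝ → Matrix (Fin d) (Fin d) ℝ,
      (∀ A : Matrix (Fin d) (Fin d) ℝ,
        (∀ v : Fin d → ℝ, X *ᵥ v = 0 → A *ᵥ v = 0) →
        (∀ v : Fin d → ℝ, X *ᵥ v = 0 → T A *ᵥ v = 0)) ∧
      (∀ A : Matrix (Fin d) (Fin d) ℝ,
        (∀ v : Fin d → ℝ, X *ᵥ v = 0 → A *ᵥ v = 0) →
        T (A - (((1 : Matrix (Fin d) (Fin d) ℝ) - α • (Xᵀ * M2 * X)) * A
              * ((1 : Matrix (Fin d) (Fin d) ℝ) - α • (Xᵀ * M2 * X))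
            + α ^ 2 • (Xᵀ * Matrix.hadamard SD (X * A * Xᵀ) * X))) = A) ∧
      (∀ A : Matrix (Fin d) (Fin d) ℝ,
        (∀ v : Fin d → ℝ, X *ᵥ v = 0 → A *ᵥ v = 0) →
        T A - (((1 : Matrix (Fin d) (Fin d) ℝ) - α • (Xᵀ * M2 * X)) * T A
              * ((1 : Matrix (Fin d) (Fin d) ℝ) - α • (Xᵀ * M2 * X))
            + α ^ 2 • (Xᵀ * Matrix.hadamard SD (X * T A * Xᵀ) * X)) = A) ∧
      specNorm (T (α ^ 2 • (Xᵀ * Matrix.hadamard SD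
            (Matrix.vecMulVec (Y - X *ᵥ what) (Y - X *ᵥ what)) * X)))
        ≤ α * specNorm (Xᵀ * X) * specNorm SD / sigmaMinPos (Xᵀ * M2 * X)
            * (l2norm (Y - X *ᵥ what)) ^ 2 ∧
      α * specNorm (Xᵀ * X) * specNorm SD / sigmaMinPos (Xᵀ * M2 * X)
          * (l2norm (Y - X *ᵥ what)) ^ 2
        ≤ (l2norm (Y - X *ᵥ what)) ^ 2 :=
  randomly_weighted_gd_stmt15_general X hXnorm Y M2 hM2psd hM2unit what SD hSDpsd α hα0 hα1 hα2
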